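/- Let G^{A,B} be a biconed graph and T a spanning tree of G^{A,B}. Consider the spanning forest of G^{A,B}_red obtained from T by deleting the edges of T_0 and the vertex 0, and mark as roots the vertex 0̄ together with all connecting vertices of T. Then: every component of this forest contains at least one root; at most one component contains two roots; and if a component contains two roots, then one root lies in A and the other lies in Ā ∪ {0̄}. In other words, the result is a birooted forest of G^{A,B}_red. -/

import Mathlib

/-!
Formalization scaffold for "h-vectors of graphic matroids of biconed graphs".

A graph `G` (loops and parallel edges allowed) with vertex set `A ∪ B` is
modelled by an abstract finite edge type `E` with an endpoint map
`ends : E → Sym2 (Fin m ⊕ₗ Fin n)`, where `A = Fin m = {1,…,m}`,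
`Ā = B \ A = Fin n = {1̄,…,n̄}` and the finset `S ⊆ Fin m` records `A ∩ B`
(so `B = S ∪ Ā`).  The biconing `G^{A,B}` adds the two vertices `0` and `0̄`
and the edges `00̄`, `0a (a ∈ A)` and `0̄b (b ∈ B)`.
-/

namespace BiconedPaper

noncomputable section
open scoped Classical

/-! ### Walks in multigraphs presented by an endpoint map -/

/-- A walk in the multigraph with edge set `ε` and endpoint map `ends`. -/
inductive MWalk {ε ν : Type} (ends : ε → Sym2 ν) : ν → ν → Type
  | nil (u : ν) : MWalk ends u u
  | cons {u w : ν} (e : ε) (v : ν) (h : ends e = s(u, v)) (p : MWalk ends v w) :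
      MWalk ends u w

namespace MWalk

variable {ε ν : Type} {ends : ε → Sym2 ν}

/-- The list of edges traversed by a walk. -/
def edges : ∀ {u v : ν}, MWalk ends u v → List ε
  | _, _, nil _ => []
  | _, _, cons e _ _ p => e :: p.edges

/-- The list of vertices visited by a walk. -/
def support : ∀ {u v : ν}, MWalk ends u v → List ν
  | u, _, nil _ => [u]
  | u, _, cons _ _ _ p => u :: p.support

/-- A walk is a path if it visits no vertex twice. -/
def IsPath {u v : ν} (p : MWalk ends u v) : Prop := p.support.Nodup

/-- All edges of the walk belong to the edge set `F`. -/
def edgesIn {u v : ν} (p : MWalk ends u v) (F : Finset ε) : Prop :=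
  ∀ e ∈ p.edges, e ∈ F

/-- The number of "bridging" edges traversed by a walk, i.e. steps whose two
endpoints lie on different sides according to `sideF`. -/
def bridgeCount (sideF : ν → Bool) : ∀ {u v : ν}, MWalk ends u v → ℕ
  | _, _, nil _ => 0
  | u, _, cons _ v' _ p => (if sideF u = sideF v' then 0 else 1) + p.bridgeCount sideF

end MWalk

/-- `u` and `v` are joined by a walk all of whose edges lie in `F`. -/
def Reachable {ε ν : Type} (ends : ε → Sym2 ν) (F : Finset ε) (u v : ν) : Prop :=
  ∃ p : MWalk ends u v, p.edgesIn F

/-- An edge set is acyclic (a forest) iff removing any one of its edges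
disconnects the endpoints of that edge.  (In particular no loops and no
parallel pairs.) -/
def IsAcyclic {ε ν : Type} [DecidableEq ε] (ends : ε → Sym2 ν) (F : Finset ε) : Prop :=
  ∀ e ∈ F, ∀ u v : ν, ends e = s(u, v) → ¬ Reachable ends (F.erase e) u v

/-- A spanning tree: an acyclic edge set connecting every pair of vertices. -/
def IsSpanningTree {ε ν : Type} [DecidableEq ε] (ends : ε → Sym2 ν) (T : Finset ε) : Prop :=
  IsAcyclic ends T ∧ ∀ u v : ν, Reachable ends T u v

/-! ### Biconed graphs -/

/-- The data of a biconed graph `G^{A,B}`:  the graph `G` has vertex set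
`A ∪ B` with `A = Fin m`, `Ā = B \ A = Fin n`, `A ∩ B = S`, and abstract
edge set `E` (so loops and parallel edges are allowed). -/
structure BiconedGraph where
  m : ℕ
  n : ℕ
  E : Type
  fintypeE : Fintype E
  decEqE : DecidableEq E
  ends : E → Sym2 (Fin m ⊕ₗ Fin n)
  S : Finset (Fin m)

namespace BiconedGraph

variable (P : BiconedGraph)

instance : Fintype P.E := P.fintypeE
instance : DecidableEq P.E := P.decEqE

/-- The vertices of `G`, linearly ordered `1 < ⋯ < m < 1̄ < ⋯ < n̄`. -/
abbrev VG := Fin P.m ⊕ₗ Fin P.n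

/-- The vertices of `G^{A,B}_red`:  `⊥` is the vertex `0̄`, ordered
`0̄ < 1 < ⋯ < m < 1̄ < ⋯ < n̄`. -/
abbrev Vred := WithBot P.VG

/-- The vertices of `G^{A,B}`: `⊥` is `0`, ordered `0 < 0̄ < 1 < ⋯ < n̄`. -/
abbrev W := WithBot P.Vred

/-- The vertex `a ∈ A`. -/
def aVert (a : Fin P.m) : P.VG := toLex (Sum.inl a)
/-- The vertex `b ∈ Ā`. -/
def bVert (b : Fin P.n) : P.VG := toLex (Sum.inr b)
/-- Inclusion of the vertices of `G` into those of `G^{A,B}_red`. -/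
def liftV (x : P.VG) : P.Vred := (x : WithBot P.VG)
/-- Inclusion of the vertices of `G^{A,B}_red` into those of `G^{A,B}`. -/
def liftW (x : P.Vred) : P.W := (x : WithBot P.Vred)

/-- The edges of the biconed graph `G^{A,B}`:  the edge `00̄`, the coning
edges `0a (a ∈ A)`, `0̄b (b ∈ Ā)`, `0̄a (a ∈ A ∩ B)`, and the edges of `G`. -/
abbrev EB := Unit ⊕ (Fin P.m ⊕ (Fin P.n ⊕ ({a : Fin P.m // a ∈ P.S} ⊕ P.E)))

/-- The edge `00̄`. -/
abbrev e00 : P.EB := Sum.inl ()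
/-- The coning edge `0a`, `a ∈ A`. -/
abbrev eA (a : Fin P.m) : P.EB := Sum.inr (Sum.inl a)
/-- The coning edge `0̄b`, `b ∈ Ā`. -/
abbrev eB (b : Fin P.n) : P.EB := Sum.inr (Sum.inr (Sum.inl b))
/-- The coning edge `0̄a`, `a ∈ A ∩ B`. -/
abbrev eS (a : {a : Fin P.m // a ∈ P.S}) : P.EB := Sum.inr (Sum.inr (Sum.inr (Sum.inl a)))
/-- An original edge of `G`. -/
abbrev eG (e : P.E) : P.EB := Sum.inr (Sum.inr (Sum.inr (Sum.inr e)))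

/-- The endpoint map of `G^{A,B}`. -/
def endsB : P.EB → Sym2 P.W
  | Sum.inl _ => s((⊥ : P.W), P.liftW ⊥)
  | Sum.inr (Sum.inl a) => s((⊥ : P.W), P.liftW (P.liftV (P.aVert a)))
  | Sum.inr (Sum.inr (Sum.inl b)) => s(P.liftW ⊥, P.liftW (P.liftV (P.bVert b)))
  | Sum.inr (Sum.inr (Sum.inr (Sum.inl a))) => s(P.liftW ⊥, P.liftW (P.liftV (P.aVert a.1)))
  | Sum.inr (Sum.inr (Sum.inr (Sum.inr e))) => (P.ends e).map fun x => P.liftW (P.liftV x)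

/-- The spanning tree `T₀`, consisting of `00̄`, the edges `0a (a ∈ A)` and
the edges `0̄b (b ∈ Ā)`. -/
def T0 : Finset P.EB :=
  Finset.univ.filter fun e => match e with
    | Sum.inl _ => True
    | Sum.inr (Sum.inl _) => True
    | Sum.inr (Sum.inr (Sum.inl _)) => True
    | _ => False

/-- The edges of `G^{A,B}_red` (delete the edges of `T₀` and the vertex `0`):
the edges `0̄a (a ∈ A ∩ B)` together with the edges of `G`. -/
abbrev Ered := {a : Fin P.m // a ∈ P.S} ⊕ P.E

/-- The endpoint map of `G^{A,B}_red`; `⊥` is the vertex `0̄`. -/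
def endsRed : P.Ered → Sym2 P.Vred
  | Sum.inl a => s((⊥ : P.Vred), P.liftV (P.aVert a.1))
  | Sum.inr e => (P.ends e).map P.liftV

/-- Inclusion of the edges of `G^{A,B}_red` into those of `G^{A,B}`. -/
def redToEB : P.Ered → P.EB
  | Sum.inl a => P.eS a
  | Sum.inr e => P.eG e

/-- The edge set `T \ T₀` of `T`, viewed inside `G^{A,B}_red`. -/
def redOf (T : Finset P.EB) : Finset P.Ered :=
  Finset.univ.filter fun e => P.redToEB e ∈ T

/-- `true` on the vertices of `A`, `false` on the vertices of `Ā ∪ {0̄}`. -/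
def side : P.Vred → Bool :=
  WithBot.recBotCoe false fun x => Sum.elim (fun _ => true) (fun _ => false) (ofLex x)

/-- The vertex lies in `A`. -/
def InA (v : P.Vred) : Prop := ∃ a : Fin P.m, v = P.liftV (P.aVert a)

/-- An edge of `G^{A,B}_red` is bridging if it joins a vertex of `A` to a
vertex of `Ā ∪ {0̄}`. -/
def BridgingE (e : P.Ered) : Prop :=
  ∃ u v : P.Vred, P.endsRed e = s(u, v) ∧ P.side u ≠ P.side v

/-! ### 2-edge-rooted forests -/

/-- The underlying edge set `F` of the multiset of edges given by the
multiplicity function `mult` (an edge `e` carries `mult e - 1` edge roots). -/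
def mSupport (mult : P.Ered → ℕ) : Finset P.Ered :=
  Finset.univ.filter fun e => mult e ≠ 0

/-- The degree of the multiset of edges given by `mult`. -/
def deg (mult : P.Ered → ℕ) : ℕ := ∑ e : P.Ered, mult e

/-- Edge `e` meets the connected component of `v` in the edge set `F`. -/
def Touches (F : Finset P.Ered) (v : P.Vred) (e : P.Ered) : Prop :=
  ∃ u : P.Vred, u ∈ P.endsRed e ∧ Reachable P.endsRed F v u

/-- The total number of edge roots in the component of `v`. -/
def compEdgeRoots (mult : P.Ered → ℕ) (v : P.Vred) : ℕ :=
  ∑ e ∈ P.mSupport mult, if P.Touches (P.mSupport mult) v e then mult e - 1 else 0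

/-- The component of `v` is `compCount`-edge-rooted:  the number of its edge
roots, plus `1` if it contains the vertex `0̄`. -/
def compCount (mult : P.Ered → ℕ) (v : P.Vred) : ℕ :=
  P.compEdgeRoots mult v +
    if Reachable P.endsRed (P.mSupport mult) v (⊥ : P.Vred) then 1 else 0

/-- Condition (C3) for the `2`-edge-rooted component of `v`:  the unique
shortest path containing both edge roots (resp. the vertex `0̄` and the edge
root, if the component contains `0̄`) has an odd number of bridging edges.
The shortest path containing two edges is the unique path whose first and
last edges are the two rooted edges; if the two edge roots lie on one common
edge (`mult e = 3`) the path is that single edge. -/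
def C3At (mult : P.Ered → ℕ) (v : P.Vred) : Prop :=
  (Reachable P.endsRed (P.mSupport mult) v (⊥ : P.Vred) →
    ∃ (x : P.Vred) (p : MWalk P.endsRed (⊥ : P.Vred) x),
      p.IsPath ∧ p.edgesIn (P.mSupport mult) ∧
      (∃ e, p.edges.getLast? = some e ∧ 2 ≤ mult e) ∧
      Odd (p.bridgeCount P.side)) ∧
  (¬ Reachable P.endsRed (P.mSupport mult) v (⊥ : P.Vred) →
    ∃ (x y : P.Vred) (p : MWalk P.endsRed x y),
      p.IsPath ∧ p.edgesIn (P.mSupport mult) ∧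
      Reachable P.endsRed (P.mSupport mult) v x ∧
      (∃ e, p.edges.head? = some e ∧ 2 ≤ mult e) ∧
      (∃ e, p.edges.getLast? = some e ∧ 2 ≤ mult e) ∧
      (∀ e, p.edges = [e] → mult e = 3) ∧
      Odd (p.bridgeCount P.side))

/-- `mult : Ered → ℕ` is (the multiplicity function of) a 2-edge-rooted
forest of `G^{A,B}_red`:
(C0) its support is a spanning forest;
(C1) at most one component is `2`-edge-rooted;
(C2) every other component is `0`- or `1`-edge-rooted;
(C3) the parity condition on the path joining the two roots. -/
def Is2ERF (mult : P.Ered → ℕ) : Prop :=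
  IsAcyclic P.endsRed (P.mSupport mult) ∧
  (∀ v : P.Vred, P.compCount mult v ≤ 2) ∧
  (∀ u v : P.Vred, P.compCount mult u = 2 → P.compCount mult v = 2 →
    Reachable P.endsRed (P.mSupport mult) u v) ∧
  (∀ v : P.Vred, P.compCount mult v = 2 → P.C3At mult v)

/-! ### Birooted forests -/

/-- `(F, R)` is a birooted forest of `G^{A,B}_red`:  `F` is a spanning forest,
the root set `R` contains `0̄`, every component of `F` contains at least one
root, no component contains three roots, at most one component contains two
roots, and a component with two roots has one root in `A` and the other in
`Ā ∪ {0̄}`. -/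
def IsBirootedForest (F : Finset P.Ered) (R : Set P.Vred) : Prop :=
  IsAcyclic P.endsRed F ∧
  (⊥ : P.Vred) ∈ R ∧
  (∀ v : P.Vred, ∃ r ∈ R, Reachable P.endsRed F v r) ∧
  (∀ r₁ ∈ R, ∀ r₂ ∈ R, ∀ r₃ ∈ R, r₁ ≠ r₂ → r₁ ≠ r₃ → r₂ ≠ r₃ →
    Reachable P.endsRed F r₁ r₂ → Reachable P.endsRed F r₁ r₃ → False) ∧
  (∀ r₁ ∈ R, ∀ r₂ ∈ R, ∀ r₃ ∈ R, ∀ r₄ ∈ R, r₁ ≠ r₂ → r₃ ≠ r₄ →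
    Reachable P.endsRed F r₁ r₂ → Reachable P.endsRed F r₃ r₄ →
    Reachable P.endsRed F r₁ r₃) ∧
  (∀ r₁ ∈ R, ∀ r₂ ∈ R, r₁ ≠ r₂ → Reachable P.endsRed F r₁ r₂ →
    (P.InA r₁ ∧ ¬ P.InA r₂) ∨ (P.InA r₂ ∧ ¬ P.InA r₁))

/-! ### Internal activity and the edge order -/

/-- `e` is internally passive in the spanning tree `T`:  it can be exchanged
for a strictly smaller edge `f` so that the result is again a spanning tree. -/
def InternallyPassive (ord : LinearOrder P.EB) (T : Finset P.EB) (e : P.EB) : Prop :=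
  e ∈ T ∧ ∃ f : P.EB, ord.lt f e ∧ IsSpanningTree P.endsB (insert f (T.erase e))

/-- `e` is internally active in the spanning tree `T`. -/
def InternallyActive (ord : LinearOrder P.EB) (T : Finset P.EB) (e : P.EB) : Prop :=
  e ∈ T ∧ ¬ ∃ f : P.EB, ord.lt f e ∧ IsSpanningTree P.endsB (insert f (T.erase e))

/-- The number of internally passive edges of `T`. -/
def ipCount (ord : LinearOrder P.EB) (T : Finset P.EB) : ℕ :=
  (T.filter fun e => P.InternallyPassive ord T e).card

/-- The smaller endpoint of an edge of `G^{A,B}`. -/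
def endMin (e : P.EB) : P.W := Sym2.lift ⟨fun a b => a ⊓ b, fun a b => inf_comm a b⟩ (P.endsB e)
/-- The larger endpoint of an edge of `G^{A,B}`. -/
def endMax (e : P.EB) : P.W := Sym2.lift ⟨fun a b => a ⊔ b, fun a b => sup_comm a b⟩ (P.endsB e)

/-- The endpoints of an edge, as an ordered pair in the lexicographic square
of the vertex order `0 < 0̄ < 1 < ⋯ < m < 1̄ < ⋯ < n̄`. -/
def lexEnds (e : P.EB) : P.W ×ₗ P.W := toLex (P.endMin e, P.endMax e)

/-- A linear order on the edges of `G^{A,B}` is admissible if it refines the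
lexicographic order on endpoints (so parallel edges are ordered arbitrarily). -/
def AdmissibleOrder (ord : LinearOrder P.EB) : Prop :=
  ∀ e f : P.EB, P.lexEnds e < P.lexEnds f → ord.lt e f

/-- `v` is a connecting vertex of `T`:  `v ∈ A` and `v` is adjacent to `0` in
`T`, or `v ∈ Ā` and `v` is adjacent to `0̄` in `T`. -/
def ConnVertex (T : Finset P.EB) (v : P.Vred) : Prop :=
  (∃ a : Fin P.m, v = P.liftV (P.aVert a) ∧ P.eA a ∈ T) ∨
  (∃ b : Fin P.n, v = P.liftV (P.bVert b) ∧ P.eB b ∈ T)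

/-- `e` is a connecting edge of `T` (an edge `0a`, `a ∈ A`, or `0̄b`, `b ∈ Ā`)
with connecting vertex `v`. -/
def ConnEdge (T : Finset P.EB) (e : P.EB) (v : P.Vred) : Prop :=
  e ∈ T ∧ ((∃ a : Fin P.m, e = P.eA a ∧ v = P.liftV (P.aVert a)) ∨
           (∃ b : Fin P.n, e = P.eB b ∧ v = P.liftV (P.bVert b)))

/-! ### The h-vector -/

/-- `f_{i-1}`:  the number of acyclic edge sets of cardinality `i` in `G^{A,B}`. -/
def numAcyclic (i : ℕ) : ℕ :=
  Nat.card {F : Finset P.EB // IsAcyclic P.endsB F ∧ F.card = i}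

/-- The rank of the graphic matroid of `G^{A,B}`:  `|V| - 1 = m + n + 1`. -/
def d : ℕ := P.m + P.n + 1

/-- `h` is the h-vector of the graphic matroid of `G^{A,B}`:  it satisfies
`Σ_{i=0}^{d} f_{i-1} (t-1)^{d-i} = Σ_{k=0}^{d} h_k t^{d-k}`. -/
def IsHVector (h : ℕ → ℤ) : Prop :=
  ∑ i ∈ Finset.range (P.d + 1),
      Polynomial.C ((P.numAcyclic i : ℤ)) * (Polynomial.X - 1) ^ (P.d - i)
    = ∑ k ∈ Finset.range (P.d + 1), Polynomial.C (h k) * Polynomial.X ^ (P.d - k)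

end BiconedGraph

/-- `(h 0, …, h d)` is a pure O-sequence:  there is a multicomplex `M` of
multisets on a finite ground set (nonempty, closed under sub-multisets), all
of whose inclusion-maximal members have the same cardinality, whose members
all have cardinality at most `d`, and which has exactly `h i` members of
cardinality `i` for every `i ≤ d`. -/
def IsPureOSeq (d : ℕ) (h : ℕ → ℤ) : Prop :=
  ∃ (N : ℕ) (M : Set (Multiset (Fin N))),
    M.Nonempty ∧
    (∀ s ∈ M, ∀ t : Multiset (Fin N), t ≤ s → t ∈ M) ∧
    (∀ s ∈ M, ∀ t ∈ M, (∀ u ∈ M, s ≤ u → u = s) → (∀ u ∈ M, t ≤ u → u = t) →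
      Multiset.card s = Multiset.card t) ∧
    (∀ s ∈ M, Multiset.card s ≤ d) ∧
    (∀ i ≤ d, (Nat.card {s : Multiset (Fin N) // s ∈ M ∧ Multiset.card s = i} : ℤ) = h i)

/-!
Every root `r` is joined in `T ∩ T₀` to a cone point, its hub: `0` if `r ∈ A`, `0̄` otherwise.
Two roots with a common hub in one component of `T \ T₀` would close a cycle of `T` through
the hub, so a component has at most one root on each side of `A`; and two components with two
roots each would close the cycle `0 – p – q – 0̄ – q' – p' – 0` of `T`. Conversely, the path of
`T` from any vertex to `0` leaves the component of that vertex through an edge of `T₀`, whose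
endpoint in the component is a root.
-/

section Reachability

variable {ε ν ε' ν' : Type} {ends : ε → Sym2 ν} {F : Finset ε} {u v w : ν}

def EdgeAdj (ends : ε → Sym2 ν) (F : Finset ε) (u v : ν) : Prop :=
  ∃ e ∈ F, ends e = s(u, v)

theorem EdgeAdj.symm (h : EdgeAdj ends F u v) : EdgeAdj ends F v u :=
  let ⟨e, he, hends⟩ := h
  ⟨e, he, hends.trans Sym2.eq_swap⟩

theorem reachable_iff_reflTransGen :
    Reachable ends F u v ↔ Relation.ReflTransGen (EdgeAdj ends F) u v := by
  constructor
  · rintro ⟨p, hp⟩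
    induction p with
    | nil => exact .refl
    | cons e _ h p ih =>
      exact .head ⟨e, hp e List.mem_cons_self, h⟩ (ih fun f hf => hp f (List.mem_cons_of_mem _ hf))
  · intro h
    induction h using Relation.ReflTransGen.head_induction_on with
    | refl => exact ⟨.nil _, fun _ hf => by simp [MWalk.edges] at hf⟩
    | head hadj _ ih =>
      obtain ⟨e, he, hends⟩ := hadj
      obtain ⟨p, hp⟩ := ih
      refine ⟨.cons e _ hends p, fun f hf => ?_⟩
      rcases List.mem_cons.1 hf with rfl | hf
      exacts [he, hp f hf]

namespace Reachable

theorem refl (u : ν) : Reachable ends F u u :=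
  reachable_iff_reflTransGen.2 .refl

theorem single {e : ε} (he : e ∈ F) (hends : ends e = s(u, v)) : Reachable ends F u v :=
  reachable_iff_reflTransGen.2 (.single ⟨e, he, hends⟩)

theorem trans (h₁ : Reachable ends F u v) (h₂ : Reachable ends F v w) :
    Reachable ends F u w :=
  reachable_iff_reflTransGen.2
    ((reachable_iff_reflTransGen.1 h₁).trans (reachable_iff_reflTransGen.1 h₂))

theorem symm (h : Reachable ends F u v) : Reachable ends F v u := by
  rw [reachable_iff_reflTransGen] at h ⊢
  rw [← Relation.reflTransGen_swap]
  exact Relation.ReflTransGen.mono (fun _ _ => EdgeAdj.symm) _ _ h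

theorem map {ends' : ε' → Sym2 ν'} {G : Finset ε'} (φ : ε → ε') (ψ : ν → ν')
    (hends : ∀ e, ends' (φ e) = (ends e).map ψ) (hFG : ∀ e ∈ F, φ e ∈ G)
    (h : Reachable ends F u v) : Reachable ends' G (ψ u) (ψ v) := by
  rw [reachable_iff_reflTransGen] at *
  refine h.lift ψ fun x y ⟨e, he, hxy⟩ => ⟨φ e, hFG e he, ?_⟩
  rw [hends, hxy, Sym2.map_mk]

theorem exists_edge_boundary {C : Set ν} (h : Reachable ends F u v) (hu : u ∈ C)
    (hv : v ∉ C) : ∃ e ∈ F, ∃ x ∈ C, ∃ y ∉ C, ends e = s(x, y) := by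
  rw [reachable_iff_reflTransGen] at h
  induction h with
  | refl => exact absurd hu hv
  | @tail x y _ hxy ih =>
    by_cases hx : x ∈ C
    · obtain ⟨e, he, hends⟩ := hxy
      exact ⟨e, he, x, hx, y, hv, hends⟩
    · exact ih hx

end Reachable

instance : Trans (Reachable ends F) (Reachable ends F) (Reachable ends F) :=
  ⟨Reachable.trans⟩

theorem IsAcyclic.comap [DecidableEq ε] [DecidableEq ε'] {ends' : ε' → Sym2 ν'}
    {G : Finset ε'} {φ : ε → ε'} (hφ : Function.Injective φ) (ψ : ν → ν')
    (hends : ∀ e, ends' (φ e) = (ends e).map ψ) (hFG : ∀ e ∈ F, φ e ∈ G)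
    (hG : IsAcyclic ends' G) : IsAcyclic ends F := by
  intro e he x y hxy hreach
  refine hG (φ e) (hFG e he) (ψ x) (ψ y) (by rw [hends, hxy, Sym2.map_mk]) ?_
  refine hreach.map φ ψ hends fun f hf => ?_
  obtain ⟨hfe, hf⟩ := Finset.mem_erase.1 hf
  exact Finset.mem_erase.2 ⟨hφ.ne hfe, hFG f hf⟩

end Reachability

namespace BiconedGraph

variable (P : BiconedGraph)

theorem liftW_injective : Function.Injective P.liftW := WithBot.coe_injective

theorem liftW_ne_bot (x : P.Vred) : P.liftW x ≠ ⊥ := WithBot.coe_ne_bot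

theorem redToEB_injective : Function.Injective P.redToEB := by
  rintro (a | e) (b | f) h <;> simp_all [redToEB]

theorem mem_redOf {T : Finset P.EB} {f : P.Ered} : f ∈ P.redOf T ↔ P.redToEB f ∈ T := by
  simp [redOf]

theorem endsB_redToEB (f : P.Ered) : P.endsB (P.redToEB f) = (P.endsRed f).map P.liftW := by
  cases f with
  | inl a => rfl
  | inr e => exact (Sym2.map_map ..).symm

theorem not_inA_bot : ¬ P.InA ⊥ := fun ⟨_, h⟩ => WithBot.bot_ne_coe h

theorem inA_liftV_aVert (a : Fin P.m) : P.InA (P.liftV (P.aVert a)) := ⟨a, rfl⟩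

theorem not_inA_liftV_bVert (b : Fin P.n) : ¬ P.InA (P.liftV (P.bVert b)) := by
  rintro ⟨a, h⟩
  simp [liftV, aVert, bVert] at h

/-- The edge of `T₀` at the vertex `x` of `G`: `0a` for `a ∈ A`, `0̄b` for `b ∈ Ā`. -/
def coneEdge (x : P.VG) : P.EB := Sum.elim P.eA P.eB (ofLex x)

theorem coneEdge_injective : Function.Injective P.coneEdge := by
  rintro x y h
  obtain ⟨a | b, rfl⟩ := toLex.surjective x <;> obtain ⟨a' | b', rfl⟩ := toLex.surjective y <;>
    simp_all [coneEdge]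

theorem redToEB_ne_coneEdge (f : P.Ered) (x : P.VG) : P.redToEB f ≠ P.coneEdge x := by
  obtain ⟨a | b, rfl⟩ := toLex.surjective x <;> rcases f with _ | _ <;> simp [redToEB, coneEdge]

theorem connVertex_iff {T : Finset P.EB} {v : P.Vred} :
    P.ConnVertex T v ↔ ∃ x, v = P.liftV x ∧ P.coneEdge x ∈ T := by
  constructor
  · rintro (⟨a, rfl, ha⟩ | ⟨b, rfl, hb⟩)
    exacts [⟨_, rfl, ha⟩, ⟨_, rfl, hb⟩]
  · rintro ⟨a | b, rfl, hx⟩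
    exacts [Or.inl ⟨a, rfl, hx⟩, Or.inr ⟨b, rfl, hx⟩]

/-- The cone point joined to `v` in `T₀`: `0` (that is, `⊥`) for `v ∈ A`, `0̄` otherwise. -/
def hub (v : P.Vred) : P.W := if P.InA v then ⊥ else P.liftW ⊥

theorem endsB_coneEdge (x : P.VG) :
    P.endsB (P.coneEdge x) = s(P.hub (P.liftV x), P.liftW (P.liftV x)) := by
  obtain ⟨a | b, rfl⟩ := toLex.surjective x
  · exact congrArg (s(·, _)) (if_pos (P.inA_liftV_aVert a)).symm
  · exact congrArg (s(·, _)) (if_neg (P.not_inA_liftV_bVert b)).symm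

def roots (T : Finset P.EB) : Set P.Vred := {v | v = ⊥ ∨ P.ConnVertex T v}

variable {P} {T : Finset P.EB} {u v r r₁ r₂ r₃ r₄ : P.Vred}

theorem mem_roots_iff : v ∈ P.roots T ↔ v = ⊥ ∨ ∃ x, v = P.liftV x ∧ P.coneEdge x ∈ T := by
  rw [roots, Set.mem_ofPred_eq, connVertex_iff]

theorem isAcyclic_redOf (hT : IsAcyclic P.endsB T) : IsAcyclic P.endsRed (P.redOf T) :=
  hT.comap P.redToEB_injective P.liftW P.endsB_redToEB fun _ => P.mem_redOf.1

theorem reachable_liftW_erase_coneEdge (x : P.VG) (h : Reachable P.endsRed (P.redOf T) u v) :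
    Reachable P.endsB (T.erase (P.coneEdge x)) (P.liftW u) (P.liftW v) :=
  h.map P.redToEB P.liftW P.endsB_redToEB fun f hf =>
    Finset.mem_erase.2 ⟨P.redToEB_ne_coneEdge f x, P.mem_redOf.1 hf⟩

theorem reachable_hub {x : P.VG} (hr : r ∈ P.roots T) (hne : r ≠ P.liftV x) :
    Reachable P.endsB (T.erase (P.coneEdge x)) (P.hub r) (P.liftW r) := by
  rcases mem_roots_iff.1 hr with rfl | ⟨y, rfl, hy⟩
  · rw [hub, if_neg P.not_inA_bot]
    exact .refl _
  · refine .single (Finset.mem_erase.2 ⟨?_, hy⟩) (P.endsB_coneEdge y)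
    exact P.coneEdge_injective.ne fun h => hne (h ▸ rfl)

theorem not_reachable_hub {x : P.VG} (hT : IsAcyclic P.endsB T) (hx : P.coneEdge x ∈ T) :
    ¬ Reachable P.endsB (T.erase (P.coneEdge x)) (P.hub (P.liftV x)) (P.liftW (P.liftV x)) :=
  hT _ hx _ _ (P.endsB_coneEdge x)

theorem hub_ne_of_reachable (hT : IsAcyclic P.endsB T) (hr₁ : r₁ ∈ P.roots T)
    (hr₂ : r₂ ∈ P.roots T) (hne : r₁ ≠ r₂) (h : Reachable P.endsRed (P.redOf T) r₁ r₂) :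
    P.hub r₁ ≠ P.hub r₂ := by
  suffices key : ∀ {x r}, P.coneEdge x ∈ T → r ∈ P.roots T → r ≠ P.liftV x →
      Reachable P.endsRed (P.redOf T) (P.liftV x) r → P.hub (P.liftV x) ≠ P.hub r by
    rcases mem_roots_iff.1 hr₁ with rfl | ⟨x, rfl, hx⟩
    · rcases mem_roots_iff.1 hr₂ with rfl | ⟨y, rfl, hy⟩
      · exact absurd rfl hne
      · exact (key hy hr₁ hne h.symm).symm
    · exact key hx hr₂ hne.symm h
  intro x r hx hr hne h heq
  refine not_reachable_hub hT hx ?_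
  rw [heq]
  exact (reachable_hub hr hne).trans (reachable_liftW_erase_coneEdge x h.symm)

theorem inA_iff_not_inA_of_reachable (hT : IsAcyclic P.endsB T) (hr₁ : r₁ ∈ P.roots T)
    (hr₂ : r₂ ∈ P.roots T) (hne : r₁ ≠ r₂) (h : Reachable P.endsRed (P.redOf T) r₁ r₂) :
    (P.InA r₁ ↔ ¬ P.InA r₂) := by
  have := hub_ne_of_reachable hT hr₁ hr₂ hne h
  unfold hub at this
  split_ifs at this <;> simp_all [P.liftW_ne_bot]

theorem eq_of_inA_of_reachable {p q p' q' : P.Vred} (hT : IsAcyclic P.endsB T)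
    (hp : p ∈ P.roots T) (hq : q ∈ P.roots T) (hp' : p' ∈ P.roots T) (hq' : q' ∈ P.roots T)
    (hpA : P.InA p) (hqA : ¬ P.InA q) (hp'A : P.InA p') (hq'A : ¬ P.InA q')
    (h : Reachable P.endsRed (P.redOf T) p q) (h' : Reachable P.endsRed (P.redOf T) p' q') :
    p = p' := by
  by_contra hne
  obtain ⟨x, rfl, hx⟩ : ∃ x, p = P.liftV x ∧ P.coneEdge x ∈ T :=
    (mem_roots_iff.1 hp).resolve_left fun h => P.not_inA_bot (h ▸ hpA)
  have hq_ne : q ≠ P.liftV x := fun h => hqA (h ▸ hpA)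
  have hq'_ne : q' ≠ P.liftV x := fun h => hq'A (h ▸ hpA)
  have hhub : P.hub (P.liftV x) = P.hub p' := by simp [hub, hpA, hp'A]
  have hhub' : P.hub q' = P.hub q := by simp [hub, hqA, hq'A]
  refine not_reachable_hub hT hx ?_
  set R := Reachable P.endsB (T.erase (P.coneEdge x))
  calc R (P.hub (P.liftV x)) (P.liftW p') := hhub ▸ reachable_hub hp' (Ne.symm hne)
    R _ (P.liftW q') := reachable_liftW_erase_coneEdge x h'
    R _ (P.hub q) := hhub' ▸ (reachable_hub hq' hq'_ne).symm
    R _ (P.liftW q) := reachable_hub hq hq_ne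
    R _ (P.liftW (P.liftV x)) := reachable_liftW_erase_coneEdge x h.symm

theorem eq_bot_of_liftW_eq_hub (h : P.liftW u = P.hub v) : u = ⊥ := by
  unfold hub at h
  split_ifs at h
  exacts [absurd h (P.liftW_ne_bot u), P.liftW_injective h]

theorem mem_roots_of_endsB_coneEdge {x : P.VG} {w : P.W} (hx : P.coneEdge x ∈ T)
    (h : P.endsB (P.coneEdge x) = s(P.liftW u, w)) : u ∈ P.roots T := by
  rw [P.endsB_coneEdge] at h
  rcases Sym2.eq_iff.1 h with ⟨h, -⟩ | ⟨-, h⟩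
  · exact .inl (eq_bot_of_liftW_eq_hub h.symm)
  · exact .inr (P.connVertex_iff.2 ⟨x, P.liftW_injective h.symm, hx⟩)

theorem exists_reachable_of_endsB_redToEB {f : P.Ered} {w : P.W} (hf : f ∈ P.redOf T)
    (h : P.endsB (P.redToEB f) = s(P.liftW u, w)) :
    ∃ u', w = P.liftW u' ∧ Reachable P.endsRed (P.redOf T) u u' := by
  obtain ⟨x, y, hxy⟩ := Sym2.exists.1 ⟨P.endsRed f, rfl⟩
  rw [P.endsB_redToEB, hxy, Sym2.map_mk] at h
  rcases Sym2.eq_iff.1 h with ⟨hx, hy⟩ | ⟨hx, hy⟩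
  · rw [P.liftW_injective hx] at hxy
    exact ⟨y, hy.symm, .single hf hxy⟩
  · rw [P.liftW_injective hy] at hxy
    exact ⟨x, hx.symm, (Reachable.single hf hxy).symm⟩

/-- The edges of `T ∩ T₀` meet `G^{A,B}_red` only in roots. -/
theorem mem_roots_or_exists_reachable {e : P.EB} {w : P.W} (he : e ∈ T)
    (h : P.endsB e = s(P.liftW u, w)) :
    u ∈ P.roots T ∨ ∃ u', w = P.liftW u' ∧ Reachable P.endsRed (P.redOf T) u u' := by
  rcases e with _ | a | b | f
  · refine .inl (.inl ?_)
    rcases Sym2.eq_iff.1 h with ⟨h, -⟩ | ⟨-, h⟩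
    exacts [absurd h.symm (P.liftW_ne_bot u), P.liftW_injective h.symm]
  · exact .inl (mem_roots_of_endsB_coneEdge (x := P.aVert a) he h)
  · exact .inl (mem_roots_of_endsB_coneEdge (x := P.bVert b) he h)
  · have hf : Sum.inr (Sum.inr (Sum.inr f)) = P.redToEB f := by rcases f with _ | _ <;> rfl
    rw [hf] at he h
    exact .inr (exists_reachable_of_endsB_redToEB (P.mem_redOf.2 he) h)

theorem exists_root_reachable (hT : ∀ x y : P.W, Reachable P.endsB T x y) (v : P.Vred) :
    ∃ r ∈ P.roots T, Reachable P.endsRed (P.redOf T) v r := by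
  by_contra! hv
  obtain ⟨e, he, _, ⟨u, hu, rfl⟩, w, hw, h⟩ :=
    (hT (P.liftW v) ⊥).exists_edge_boundary
      (C := P.liftW '' {u | Reachable P.endsRed (P.redOf T) v u}) ⟨v, .refl v, rfl⟩
      fun ⟨_, _, h⟩ => P.liftW_ne_bot _ h
  rcases mem_roots_or_exists_reachable he h with hr | ⟨u', rfl, hu'⟩
  · exact hv u hr hu
  · exact hw ⟨u', hu.trans hu', rfl⟩

theorem reachable_of_two_birooted (hT : IsAcyclic P.endsB T) (hr₁ : r₁ ∈ P.roots T)
    (hr₂ : r₂ ∈ P.roots T) (hr₃ : r₃ ∈ P.roots T) (hr₄ : r₄ ∈ P.roots T) (h₁₂ : r₁ ≠ r₂)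
    (h₃₄ : r₃ ≠ r₄) (h : Reachable P.endsRed (P.redOf T) r₁ r₂)
    (h' : Reachable P.endsRed (P.redOf T) r₃ r₄) :
    Reachable P.endsRed (P.redOf T) r₁ r₃ := by
  have side := inA_iff_not_inA_of_reachable hT hr₁ hr₂ h₁₂ h
  have side' := inA_iff_not_inA_of_reachable hT hr₃ hr₄ h₃₄ h'
  by_cases hA : P.InA r₁ <;> by_cases hA' : P.InA r₃
  · rw [eq_of_inA_of_reachable hT hr₁ hr₂ hr₃ hr₄ hA (by tauto) hA' (by tauto) h h']
    exact .refl _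
  · rw [eq_of_inA_of_reachable hT hr₁ hr₂ hr₄ hr₃ hA (by tauto) (by tauto) hA' h h'.symm]
    exact h'.symm
  · rw [← eq_of_inA_of_reachable hT hr₂ hr₁ hr₃ hr₄ (by tauto) hA hA' (by tauto) h.symm h']
    exact h
  · have := eq_of_inA_of_reachable hT hr₂ hr₁ hr₄ hr₃ (by tauto) hA (by tauto) hA' h.symm h'.symm
    exact h.trans (this ▸ h'.symm)

end BiconedGraph

/-- well-definedness of `φ₁` in Lemma 3.4.  For a spanning
tree `T` of `G^{A,B}`, the spanning forest `T \\ T₀` of `G^{A,B}_red`, with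
roots the vertex `0̄` together with all connecting vertices of `T`, is a
birooted forest of `G^{A,B}_red`:  every component contains at least one
root, at most one component contains two roots, and in a component with two
roots one root lies in `A` and the other in `Ā ∪ {0̄}`. -/
theorem redOf_spanningTree_birooted (P : BiconedGraph)
    (T : Finset P.EB) (hT : IsSpanningTree P.endsB T) :
    P.IsBirootedForest (P.redOf T)
      {v : P.Vred | v = (⊥ : P.Vred) ∨ P.ConnVertex T v} := by
  obtain ⟨hacyc, hconn⟩ := hT
  refine ⟨BiconedGraph.isAcyclic_redOf hacyc, Or.inl rfl,
    BiconedGraph.exists_root_reachable hconn, ?_,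
    fun _ h₁ _ h₂ _ h₃ _ h₄ => BiconedGraph.reachable_of_two_birooted hacyc h₁ h₂ h₃ h₄, ?_⟩
  · intro r₁ h₁ r₂ h₂ r₃ h₃ h₁₂ h₁₃ h₂₃ r₁₂ r₁₃
    have := BiconedGraph.inA_iff_not_inA_of_reachable hacyc h₁ h₂ h₁₂ r₁₂
    have := BiconedGraph.inA_iff_not_inA_of_reachable hacyc h₁ h₃ h₁₃ r₁₃
    have := BiconedGraph.inA_iff_not_inA_of_reachable hacyc h₂ h₃ h₂₃ (r₁₂.symm.trans r₁₃)
    tauto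
  · intro r₁ h₁ r₂ h₂ hne h
    have := BiconedGraph.inA_iff_not_inA_of_reachable hacyc h₁ h₂ hne h
    tauto

end

end BiconedPaper
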